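/- arXiv:1811.09357 — 3 statements merged into one kernel-verified Lean document; each statement's English description precedes it below -/
import Mathlib

section
/- The function $\tau_1(a,b) = -2\,\mathrm{sign}(\sin(\pi a)\sin(\pi b)\sin(\pi(a+b)))$, defined for $a, b \in [0,1)$ and descending to $\mathbb{R}/\mathbb{Z}$, satisfies the 2-cocycle identity $\tau_1(x,y) + \tau_1(x+y,z) = \tau_1(y,z) + \tau_1(x,y+z)$ for all $x, y, z \in \mathbb{R}/\mathbb{Z}$. -/
open Real

/-- The Meyer cocycle for genus one:
`τ₁(a,b) = -2 · sign(sin(πa) sin(πb) sin(π(a+b)))`.  It descends to `ℝ/ℤ`. -/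
noncomputable def meyerTau1 (a b : ℝ) : ℝ :=
  -2 * Real.sign (Real.sin (π * a) * Real.sin (π * b) * Real.sin (π * (a + b)))

noncomputable def mT (s t : ℝ) : ℝ :=
  if 0 < s then if 0 < t then
    (if s + t < 1 then -2 else if 1 < s + t then 2 else 0) else 0 else 0

lemma sin_pi_fract (a : ℝ) : Real.sin (π * a) = (-1) ^ ⌊a⌋ * Real.sin (π * Int.fract a) := by
  have h : π * a = π * Int.fract a + ⌊a⌋ * π := by
    rw [Int.fract]; ring
  rw [h, Real.sin_add_int_mul_pi]

lemma prod_fract (a b : ℝ) :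
    Real.sin (π * a) * Real.sin (π * b) * Real.sin (π * (a + b)) =
      Real.sin (π * Int.fract a) * Real.sin (π * Int.fract b) *
        Real.sin (π * (Int.fract a + Int.fract b)) := by
  have hab : Real.sin (π * (a + b)) =
      (-1) ^ (⌊a⌋ + ⌊b⌋) * Real.sin (π * (Int.fract a + Int.fract b)) := by
    have h : π * (a + b) = π * (Int.fract a + Int.fract b) + (⌊a⌋ + ⌊b⌋ : ℤ) * π := by
      rw [Int.fract, Int.fract]; push_cast; ring
    rw [h, Real.sin_add_int_mul_pi]
  have h1 : ((-1:ℝ) ^ ⌊a⌋) * ((-1:ℝ) ^ ⌊b⌋) * ((-1:ℝ) ^ (⌊a⌋ + ⌊b⌋)) = 1 := by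
    rw [← zpow_add₀ (by norm_num : (-1:ℝ) ≠ 0), ← zpow_add₀ (by norm_num : (-1:ℝ) ≠ 0),
      show ⌊a⌋ + ⌊b⌋ + (⌊a⌋ + ⌊b⌋) = 2 * (⌊a⌋ + ⌊b⌋) by ring, zpow_mul]
    norm_num
  rw [sin_pi_fract a, sin_pi_fract b, hab]
  linear_combination (Real.sin (π * Int.fract a) * Real.sin (π * Int.fract b) *
    Real.sin (π * (Int.fract a + Int.fract b))) * h1

lemma sin_pos' {s : ℝ} (h0 : 0 < s) (h1 : s < 1) : 0 < Real.sin (π * s) :=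
  Real.sin_pos_of_pos_of_lt_pi (by positivity) (by nlinarith [Real.pi_pos])

lemma mT_eq (s t : ℝ) (hs : 0 ≤ s) (hs1 : s < 1) (ht : 0 ≤ t) (ht1 : t < 1) :
    -2 * Real.sign (Real.sin (π * s) * Real.sin (π * t) * Real.sin (π * (s + t))) = mT s t := by
  rw [mT]
  split_ifs with h1 h2 h3 h4
  · have ha := sin_pos' h1 hs1
    have hb := sin_pos' h2 ht1
    have hc : 0 < Real.sin (π * (s + t)) := sin_pos' (by linarith) h3
    rw [Real.sign_of_pos (by positivity)]; norm_num
  · have hst : Real.sin (π * (s + t)) < 0 := by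
      have h : π * (s + t) = π * (s + t - 1) + (1 : ℤ) * π := by push_cast; ring
      rw [h, Real.sin_add_int_mul_pi]
      have := sin_pos' (by linarith : (0:ℝ) < s + t - 1) (by linarith)
      simp only [zpow_one]
      linarith
    have ha := sin_pos' h1 hs1
    have hb := sin_pos' h2 ht1
    rw [Real.sign_of_neg (mul_neg_of_pos_of_neg (mul_pos ha hb) hst)]
    norm_num
  · have h : s + t = 1 := le_antisymm (not_lt.mp h4) (not_lt.mp h3)
    rw [h]
    simp
  · have h : t = 0 := le_antisymm (not_lt.mp h2) ht
    subst h
    simp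
  · have h : s = 0 := le_antisymm (not_lt.mp h1) hs
    subst h
    simp

lemma meyerTau1_eq (a b : ℝ) : meyerTau1 a b = mT (Int.fract a) (Int.fract b) := by
  rw [meyerTau1, prod_fract]
  exact mT_eq _ _ (Int.fract_nonneg a) (Int.fract_lt_one a)
    (Int.fract_nonneg b) (Int.fract_lt_one b)

lemma fract_eq_ite {u v : ℝ} (hu : 0 ≤ u) (hu1 : u < 1) (hv : 0 ≤ v) (hv1 : v < 1) :
    Int.fract (u + v) = if u + v < 1 then u + v else u + v - 1 := by
  split_ifs with h
  · exact Int.fract_eq_self.mpr ⟨by linarith, h⟩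
  · conv_lhs => rw [show u + v = (u + v - 1) + (1 : ℤ) by push_cast; ring]
    rw [Int.fract_add_intCast]
    exact Int.fract_eq_self.mpr ⟨by linarith, by linarith⟩

lemma fract_add_eq (a b : ℝ) : Int.fract (a + b) = Int.fract (Int.fract a + Int.fract b) := by
  conv_lhs => rw [← Int.fract_add_floor a, ← Int.fract_add_floor b]
  rw [show Int.fract a + ⌊a⌋ + (Int.fract b + ⌊b⌋)
      = Int.fract a + Int.fract b + ((⌊a⌋ + ⌊b⌋ : ℤ) : ℝ) by push_cast; ring,
    Int.fract_add_intCast]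

set_option maxHeartbeats 2000000 in
lemma mT_cocycle (u v w : ℝ) (hu : 0 ≤ u) (hu1 : u < 1) (hv : 0 ≤ v) (hv1 : v < 1)
    (hw : 0 ≤ w) (hw1 : w < 1) :
    mT u v + mT (Int.fract (u + v)) w = mT v w + mT u (Int.fract (v + w)) := by
  rw [fract_eq_ite hu hu1 hv hv1, fract_eq_ite hv hv1 hw hw1]
  simp only [mT]
  split_ifs <;> linarith

/-- `τ₁` satisfies the 2-cocycle identity on `ℝ/ℤ` (stated for all real
representatives; the formula only depends on the classes mod `ℤ`). -/
theorem meyerTau1_is_cocycle (x y z : ℝ) :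
    meyerTau1 x y + meyerTau1 (x + y) z = meyerTau1 y z + meyerTau1 x (y + z) := by
  rw [meyerTau1_eq x y, meyerTau1_eq (x + y) z, meyerTau1_eq y z, meyerTau1_eq x (y + z),
    fract_add_eq x y, fract_add_eq y z]
  exact mT_cocycle _ _ _ (Int.fract_nonneg x) (Int.fract_lt_one x)
    (Int.fract_nonneg y) (Int.fract_lt_one y) (Int.fract_nonneg z) (Int.fract_lt_one z)
end

section
/- For $a, b \in [0,1)$, the difference between the Meyer cocycle $\tau_1(a,b) = -2\,\mathrm{sign}(\sin\pi a \sin\pi b \sin\pi(a+b))$ and the Maslov cocycle $\tau'_1(a,b) = -\mathrm{sign}(\sin 2\pi a \sin 2\pi b \sin 2\pi(a+b))$ equals the coboundary $-\mathrm{sign}(\sin 2\pi a) - \mathrm{sign}(\sin 2\pi b) + \mathrm{sign}(\sin 2\pi(a+b))$. -/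
open Real

private lemma sgn_mul (x y : ℝ) : (x * y).sign = x.sign * y.sign := by
  rcases lt_trichotomy x 0 with hx|rfl|hx
  · rcases lt_trichotomy y 0 with hy|rfl|hy
    · rw [Real.sign_of_pos (mul_pos_of_neg_of_neg hx hy), Real.sign_of_neg hx,
        Real.sign_of_neg hy]; norm_num
    · simp
    · rw [Real.sign_of_neg (mul_neg_of_neg_of_pos hx hy), Real.sign_of_neg hx,
        Real.sign_of_pos hy]; norm_num
  · simp
  · rcases lt_trichotomy y 0 with hy|rfl|hy
    · rw [Real.sign_of_neg (mul_neg_of_pos_of_neg hx hy), Real.sign_of_pos hx,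
        Real.sign_of_neg hy]; norm_num
    · simp
    · rw [Real.sign_of_pos (mul_pos hx hy), Real.sign_of_pos hx, Real.sign_of_pos hy]; norm_num

private lemma sin_sign_1 {x : ℝ} (h1 : 0 < x) (h2 : x < 1) : (Real.sin (π * x)).sign = 1 := by
  refine Real.sign_of_pos (Real.sin_pos_of_pos_of_lt_pi (mul_pos Real.pi_pos h1) ?_)
  calc π * x < π * 1 := by exact mul_lt_mul_of_pos_left h2 Real.pi_pos
  _ = π := mul_one π

private lemma sin_sign_2 {x : ℝ} (h1 : 1 < x) (h2 : x < 2) : (Real.sin (π * x)).sign = -1 := by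
  have key : Real.sin (π * x) = -Real.sin (π * (x - 1)) := by
    rw [show π * (x - 1) = π * x - π by ring, Real.sin_sub_pi]; ring
  have hpos : (0:ℝ) < Real.sin (π * (x - 1)) :=
    Real.sin_pos_of_pos_of_lt_pi (mul_pos Real.pi_pos (by linarith))
      (by calc π * (x-1) < π * 1 := mul_lt_mul_of_pos_left (by linarith) Real.pi_pos
          _ = π := mul_one π)
  rw [key]; exact Real.sign_of_neg (by linarith)

private lemma sin_shift {x : ℝ} : Real.sin (π * x) = Real.sin (π * (x - 2)) := by
  rw [show π * (x - 2) = π * x - 2 * π by ring, Real.sin_sub_two_pi]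

private lemma sin_sign_3 {x : ℝ} (h1 : 2 < x) (h2 : x < 3) : (Real.sin (π * x)).sign = 1 := by
  rw [sin_shift]; exact sin_sign_1 (by linarith) (by linarith)

private lemma sin_sign_4 {x : ℝ} (h1 : 3 < x) (h2 : x < 4) : (Real.sin (π * x)).sign = -1 := by
  rw [sin_shift]; exact sin_sign_2 (by linarith) (by linarith)

private lemma two_pi_eq (x : ℝ) : 2 * π * x = π * (2 * x) := by ring

private lemma s2_1 {x : ℝ} (h1 : 0 < x) (h2 : x < 1/2) : (Real.sin (2 * π * x)).sign = 1 := by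
  rw [two_pi_eq]; exact sin_sign_1 (by linarith) (by linarith)

private lemma s2_2 {x : ℝ} (h1 : 1/2 < x) (h2 : x < 1) : (Real.sin (2 * π * x)).sign = -1 := by
  rw [two_pi_eq]; exact sin_sign_2 (by linarith) (by linarith)

private lemma s2_3 {x : ℝ} (h1 : 1 < x) (h2 : x < 3/2) : (Real.sin (2 * π * x)).sign = 1 := by
  rw [two_pi_eq]; exact sin_sign_3 (by linarith) (by linarith)

private lemma s2_4 {x : ℝ} (h1 : 3/2 < x) (h2 : x < 2) : (Real.sin (2 * π * x)).sign = -1 := by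
  rw [two_pi_eq]; exact sin_sign_4 (by linarith) (by linarith)

private lemma s2_half {x : ℝ} (h : x = 1/2) : (Real.sin (2 * π * x)).sign = 0 := by
  rw [h, show 2 * π * (1/2 : ℝ) = π by ring, Real.sin_pi, Real.sign_zero]

private lemma s2_one {x : ℝ} (h : x = 1) : (Real.sin (2 * π * x)).sign = 0 := by
  rw [h, mul_one, Real.sin_two_pi, Real.sign_zero]

private lemma s2_threehalf {x : ℝ} (h : x = 3/2) : (Real.sin (2 * π * x)).sign = 0 := by
  rw [h, show 2 * π * (3/2 : ℝ) = π + 2 * π by ring, Real.sin_add_two_pi, Real.sin_pi,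
    Real.sign_zero]

private lemma s1_one {x : ℝ} (h : x = 1) : (Real.sin (π * x)).sign = 0 := by
  rw [h, mul_one, Real.sin_pi, Real.sign_zero]

/-- For `a, b ∈ [0,1)`, the difference between the Meyer cocycle
`τ₁(a,b) = -2 sign(sin πa · sin πb · sin π(a+b))` and the Maslov cocycle
`τ'₁(a,b) = -sign(sin 2πa · sin 2πb · sin 2π(a+b))` is the coboundary
`-sign(sin 2πa) - sign(sin 2πb) + sign(sin 2π(a+b))`. -/
theorem meyer_sub_maslov_is_coboundary (a b : ℝ)
    (ha : a ∈ Set.Ico (0 : ℝ) 1) (hb : b ∈ Set.Ico (0 : ℝ) 1) :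
    -2 * Real.sign (Real.sin (π * a) * Real.sin (π * b) * Real.sin (π * (a + b)))
      + Real.sign (Real.sin (2 * π * a) * Real.sin (2 * π * b) *
          Real.sin (2 * π * (a + b)))
      = -Real.sign (Real.sin (2 * π * a)) - Real.sign (Real.sin (2 * π * b))
          + Real.sign (Real.sin (2 * π * (a + b))) := by
  obtain ⟨ha0, ha1⟩ := ha
  obtain ⟨hb0, hb1⟩ := hb
  rcases eq_or_lt_of_le ha0 with h|ha0
  · rw [← h]; simp
  rcases eq_or_lt_of_le hb0 with h|hb0
  · rw [← h]; simp
  have h1 := sin_sign_1 ha0 ha1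
  have h2 := sin_sign_1 hb0 hb1
  rcases lt_trichotomy a (1/2) with haH|haH|haH
  · have hA2 := s2_1 ha0 haH
    rcases lt_trichotomy b (1/2) with hbH|hbH|hbH
    · have hB2 := s2_1 hb0 hbH
      have hW := sin_sign_1 (show (0:ℝ) < a + b by linarith) (by linarith)
      rcases lt_trichotomy (a + b) (1/2) with h|h|h
      · have hW2 := s2_1 (show (0:ℝ) < a + b by linarith) h
        simp only [sgn_mul, h1, h2, hA2, hB2, hW, hW2]; norm_num
      · have hW2 := s2_half h
        simp only [sgn_mul, h1, h2, hA2, hB2, hW, hW2]; norm_num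
      · have hW2 := s2_2 h (by linarith)
        simp only [sgn_mul, h1, h2, hA2, hB2, hW, hW2]; norm_num
    · have hB2 := s2_half hbH
      have hW := sin_sign_1 (show (0:ℝ) < a + b by linarith) (by linarith)
      have hW2 := s2_2 (show (1:ℝ)/2 < a + b by linarith) (by linarith)
      simp only [sgn_mul, h1, h2, hA2, hB2, hW, hW2]; norm_num
    · have hB2 := s2_2 hbH hb1
      rcases lt_trichotomy (a + b) 1 with h|h|h
      · have hW := sin_sign_1 (show (0:ℝ) < a + b by linarith) h
        have hW2 := s2_2 (show (1:ℝ)/2 < a + b by linarith) h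
        simp only [sgn_mul, h1, h2, hA2, hB2, hW, hW2]; norm_num
      · have hW := s1_one h
        have hW2 := s2_one h
        simp only [sgn_mul, h1, h2, hA2, hB2, hW, hW2]; norm_num
      · have hW := sin_sign_2 h (by linarith)
        have hW2 := s2_3 h (by linarith)
        simp only [sgn_mul, h1, h2, hA2, hB2, hW, hW2]; norm_num
  · have hA2 := s2_half haH
    rcases lt_trichotomy b (1/2) with hbH|hbH|hbH
    · have hB2 := s2_1 hb0 hbH
      have hW := sin_sign_1 (show (0:ℝ) < a + b by linarith) (by linarith)
      have hW2 := s2_2 (show (1:ℝ)/2 < a + b by linarith) (by linarith)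
      simp only [sgn_mul, h1, h2, hA2, hB2, hW, hW2]; norm_num
    · have hB2 := s2_half hbH
      have hW := s1_one (show a + b = 1 by linarith)
      have hW2 := s2_one (show a + b = 1 by linarith)
      simp only [sgn_mul, h1, h2, hA2, hB2, hW, hW2]; norm_num
    · have hB2 := s2_2 hbH hb1
      have hW := sin_sign_2 (show (1:ℝ) < a + b by linarith) (by linarith)
      have hW2 := s2_3 (show (1:ℝ) < a + b by linarith) (by linarith)
      simp only [sgn_mul, h1, h2, hA2, hB2, hW, hW2]; norm_num
  · have hA2 := s2_2 haH ha1
    rcases lt_trichotomy b (1/2) with hbH|hbH|hbH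
    · have hB2 := s2_1 hb0 hbH
      rcases lt_trichotomy (a + b) 1 with h|h|h
      · have hW := sin_sign_1 (show (0:ℝ) < a + b by linarith) h
        have hW2 := s2_2 (show (1:ℝ)/2 < a + b by linarith) h
        simp only [sgn_mul, h1, h2, hA2, hB2, hW, hW2]; norm_num
      · have hW := s1_one h
        have hW2 := s2_one h
        simp only [sgn_mul, h1, h2, hA2, hB2, hW, hW2]; norm_num
      · have hW := sin_sign_2 h (by linarith)
        have hW2 := s2_3 h (by linarith)
        simp only [sgn_mul, h1, h2, hA2, hB2, hW, hW2]; norm_num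
    · have hB2 := s2_half hbH
      have hW := sin_sign_2 (show (1:ℝ) < a + b by linarith) (by linarith)
      have hW2 := s2_3 (show (1:ℝ) < a + b by linarith) (by linarith)
      simp only [sgn_mul, h1, h2, hA2, hB2, hW, hW2]; norm_num
    · have hB2 := s2_2 hbH hb1
      have hW := sin_sign_2 (show (1:ℝ) < a + b by linarith) (by linarith)
      rcases lt_trichotomy (a + b) (3/2) with h|h|h
      · have hW2 := s2_3 (show (1:ℝ) < a + b by linarith) h
        simp only [sgn_mul, h1, h2, hA2, hB2, hW, hW2]; norm_num
      · have hW2 := s2_threehalf h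
        simp only [sgn_mul, h1, h2, hA2, hB2, hW, hW2]; norm_num
      · have hW2 := s2_4 h (by linarith)
        simp only [sgn_mul, h1, h2, hA2, hB2, hW, hW2]; norm_num
end

section
/- Let $(V, b)$ be a nonsingular symplectic form over a field and $L_1, L_2, L_3$ lagrangians with inclusions $j_i : L_i \to V$. Let $\Delta = \{(a,b,c) \in L_1 \oplus L_2 \oplus L_3 : a + b + c = 0\}$. Then the bilinear form $\mathfrak{a}$ on $\Delta$ defined by $\mathfrak{a}((a,b,c),(a',b',c')) = b(b, a')$ is symmetric. -/
/-- Wall's form is symmetric: for a nonsingular symplectic form `B` on a vector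
space `V` over a field `K`, lagrangians `L₁, L₂, L₃`, and triples
`(a,b,c), (a',b',c')` in `Δ = {(a,b,c) ∈ L₁ ⊕ L₂ ⊕ L₃ : a+b+c = 0}`, one has
`𝔞((a,b,c),(a',b',c')) = B b a' = B b' a = 𝔞((a',b',c'),(a,b,c))`. -/
theorem wall_form_symmetric {K V : Type*} [Field K] [AddCommGroup V] [Module K V]
    [FiniteDimensional K V]
    (B : V →ₗ[K] V →ₗ[K] K) (halt : ∀ x : V, B x x = 0)
    (hns : Function.Bijective ⇑B)
    (L₁ L₂ L₃ : Submodule K V)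
    (hL₁ : ∀ x : V, x ∈ L₁ ↔ ∀ y ∈ L₁, B x y = 0)
    (hL₂ : ∀ x : V, x ∈ L₂ ↔ ∀ y ∈ L₂, B x y = 0)
    (hL₃ : ∀ x : V, x ∈ L₃ ↔ ∀ y ∈ L₃, B x y = 0)
    (a b c a' b' c' : V)
    (ha : a ∈ L₁) (hb : b ∈ L₂) (hc : c ∈ L₃)
    (ha' : a' ∈ L₁) (hb' : b' ∈ L₂) (hc' : c' ∈ L₃)
    (hsum : a + b + c = 0) (hsum' : a' + b' + c' = 0) :
    B b a' = B b' a := by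
  have skew : ∀ x y : V, B x y = -B y x := by
    intro x y
    have h := halt (x + y)
    simp only [map_add, LinearMap.add_apply, halt] at h
    linear_combination h
  have hbb' : B b b' = 0 := (hL₂ b).mp hb b' hb'
  have hcc' : B c c' = 0 := (hL₃ c).mp hc c' hc'
  have haa' : B a a' = 0 := (hL₁ a).mp ha a' ha'
  have ha'eq : a' = -b' - c' := by rw [sub_eq_add_neg, ← neg_add]; exact eq_neg_of_add_eq_zero_left (by rw [← add_assoc]; exact hsum')
  have hbeq : b = -a - c := by
    have h0 : a + (b + c) = 0 := by rw [← add_assoc]; exact hsum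
    exact eq_sub_of_add_eq (eq_neg_of_add_eq_zero_right h0)
  calc B b a' = B b (-b' - c') := by rw [ha'eq]
    _ = -B b c' := by simp [map_sub, map_neg, hbb']
    _ = -B (-a - c) c' := by rw [hbeq]
    _ = B a c' := by simp [hcc']
    _ = -B a (-b' - c') + -B a b' := by simp
    _ = -B a a' + -B a b' := by rw [ha'eq]
    _ = B b' a := by rw [haa', skew b' a]; ring
end
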